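/- arXiv:2304.07231 — 3 statements merged into one kernel-verified Lean document; each statement's English description precedes it below -/
import Mathlib

section
/- Let G be a locally compact paratopological gyrocommutative gyrogroup and let 𝒰 be a neighborhood base at the identity 0 of G. Then B = ⋂{cl(U) : U ∈ 𝒰} is a closed invariant subgyrogroup of G. -/
/-- A gyrogroup: a groupoid with identity, inverses, gyroautomorphisms satisfying the
left gyroassociative law and the left loop property. -/
class Gyrogroup (G : Type*) extends Zero G, Add G, Neg G where
  gyr : G → G → G → G
  zero_add : ∀ x : G, 0 + x = x
  add_zero : ∀ x : G, x + 0 = x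
  neg_add_cancel : ∀ x : G, -x + x = 0
  add_neg_cancel : ∀ x : G, x + -x = 0
  gyr_bijective : ∀ x y : G, Function.Bijective (gyr x y)
  gyr_add : ∀ x y a b : G, gyr x y (a + b) = gyr x y a + gyr x y b
  add_gyr_assoc : ∀ x y z : G, x + (y + z) = (x + y) + gyr x y z
  gyr_left_loop : ∀ x y : G, gyr (x + y) y = gyr x y

open Gyrogroup

/-- `𝒰` is a neighborhood base at the point `x`. -/
def IsNhdsBasisAt {G : Type*} [TopologicalSpace G] (x : G) (𝒰 : Set (Set G)) : Prop :=
  (∀ U ∈ 𝒰, U ∈ nhds x) ∧ ∀ V ∈ nhds x, ∃ U ∈ 𝒰, U ⊆ V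

/-- Every member of `𝒰` is invariant under all gyroautomorphisms: this is the witness that
a paratopological gyrogroup is *strongly* paratopological when `𝒰` is a nbhd base at `0`. -/
def GyrInvariantBase {G : Type*} [Gyrogroup G] (𝒰 : Set (Set G)) : Prop :=
  ∀ U ∈ 𝒰, ∀ x y : G, gyr x y '' U = U

/-- `B = ⋂ {cl U : U ∈ 𝒰}`. -/
def clCore {G : Type*} [TopologicalSpace G] (𝒰 : Set (Set G)) : Set G :=
  ⋂ U ∈ 𝒰, closure U


namespace GyroAux

variable {G : Type*} [Gyrogroup G]

theorem add_left_cancel' {a b c : G} (h : a + b = a + c) : b = c := by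
  have h2 : ∀ x : G, -a + (a + x) = gyr (-a) a x := by
    intro x
    rw [add_gyr_assoc, Gyrogroup.neg_add_cancel, Gyrogroup.zero_add]
  have h3 : -a + (a + b) = -a + (a + c) := by rw [h]
  rw [h2 b, h2 c] at h3
  exact (gyr_bijective (-a) a).1 h3

theorem gyr_zero_left (a z : G) : gyr (0 : G) a z = z := by
  have h : (0 : G) + (a + z) = (0 + a) + gyr 0 a z := add_gyr_assoc 0 a z
  rw [Gyrogroup.zero_add, Gyrogroup.zero_add] at h
  exact (add_left_cancel' h).symm

theorem lc (a b : G) : -a + (a + b) = b := by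
  rw [add_gyr_assoc, Gyrogroup.neg_add_cancel, Gyrogroup.zero_add]
  have h : gyr ((-a : G) + a) a = gyr (-a) a := gyr_left_loop (-a) a
  rw [Gyrogroup.neg_add_cancel] at h
  rw [← h, gyr_zero_left]

theorem lc2 (a b : G) : a + (-a + b) = b := by
  apply add_left_cancel' (a := -a)
  rw [lc]

theorem neg_zero' : (-0 : G) = 0 := by
  have h := Gyrogroup.neg_add_cancel (0 : G)
  rwa [Gyrogroup.add_zero] at h

theorem neg_neg' (a : G) : -(-a) = a := by
  apply add_left_cancel' (a := -a)
  rw [Gyrogroup.add_neg_cancel, Gyrogroup.neg_add_cancel]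

theorem eq_neg_of_add_eq_zero {a b : G} (h : a + b = 0) : b = -a := by
  apply add_left_cancel' (a := a)
  rw [h, Gyrogroup.add_neg_cancel]

theorem gyr_zero (a b : G) : gyr a b (0 : G) = 0 := by
  have h : gyr a b (0 : G) + gyr a b 0 = gyr a b 0 + 0 := by
    rw [← gyr_add, Gyrogroup.zero_add, Gyrogroup.add_zero]
  exact add_left_cancel' h

theorem gyr_neg (a b x : G) : gyr a b (-x) = -(gyr a b x) := by
  apply eq_neg_of_add_eq_zero
  rw [← gyr_add, Gyrogroup.add_neg_cancel, gyr_zero]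

theorem gyrator (x y z : G) : -(x + y) + (x + (y + z)) = gyr x y z := by
  rw [add_gyr_assoc x y z, lc]

theorem gyrosum_inv (a b : G) : -(a + b) = gyr a b (-b + -a) := by
  have h : (a + b) + gyr a b (-b + -a) = 0 := by
    rw [← add_gyr_assoc, lc2, Gyrogroup.add_neg_cancel]
  exact (eq_neg_of_add_eq_zero h).symm

theorem gyr_gyr_cancel (a b z : G) : gyr a b (gyr (-b) (-a) z) = z := by
  set w := gyr (-b) (-a) z with hw
  have h1 : (a + b) + gyr a b ((-b + -a) + w) = z := by
    rw [← add_gyr_assoc, hw, ← add_gyr_assoc, lc2, lc2]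
  rw [gyr_add, ← gyrosum_inv] at h1
  rwa [lc2] at h1

theorem aip (hg : ∀ a b : G, a + b = gyr a b (b + a)) (a b : G) :
    -(a + b) = -a + -b := by
  rw [gyrosum_inv, hg (-b) (-a), gyr_gyr_cancel]

theorem rdiv_add (a b : G) : (b + gyr b a (-a)) + a = b := by
  set t := gyr b a (-a) with ht
  have h1 : (b + a) + t = b := by
    rw [ht, ← add_gyr_assoc, Gyrogroup.add_neg_cancel, Gyrogroup.add_zero]
  have hdag : ∀ z, gyr (b + a) t (gyr b a z) = z := by
    intro z
    have w1 : (b + a) + gyr b a (-a + z) = b + z := by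
      rw [← add_gyr_assoc, lc2]
    have w2 : (b + a) + gyr b a (-a + z) = b + gyr (b + a) t (gyr b a z) := by
      rw [gyr_add, ← ht, add_gyr_assoc, h1]
    exact add_left_cancel' (w2.symm.trans w1)
  have hloop : gyr b t = gyr (b + a) t := by
    conv_lhs => rw [← h1]
    exact gyr_left_loop (b + a) t
  have ha : gyr b t (gyr b a a) = a := by rw [hloop]; exact hdag a
  calc (b + t) + a = (b + t) + gyr b t (gyr b a a) := by rw [ha]
    _ = b + (t + gyr b a a) := (add_gyr_assoc _ _ _).symm
    _ = b + gyr b a (-a + a) := by rw [ht, ← gyr_add]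
    _ = b := by rw [Gyrogroup.neg_add_cancel, gyr_zero, Gyrogroup.add_zero]

theorem rdiv_eq (c b : G) : c + gyr c b (-b) = c + (-(c + b) + c) := by
  have h : gyr c b (-b) = -(c + b) + c := by
    rw [← gyrator, Gyrogroup.add_neg_cancel, Gyrogroup.add_zero]
  rw [h]

/-- gyration-free form of right cancellation -/
theorem rdiv_add' (c b : G) : (c + (-(c + b) + c)) + b = c := by
  rw [← rdiv_eq]; exact rdiv_add b c

theorem add_right_cancel' {x y a : G} (h : x + a = y + a) : x = y := by
  have key : ∀ w : G, w = (w + a) + gyr (w + a) a (-a) := by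
    intro w
    have h1 : w = (w + a) + gyr w a (-a) := by
      rw [← add_gyr_assoc, Gyrogroup.add_neg_cancel, Gyrogroup.add_zero]
    rwa [← gyr_left_loop w a] at h1
  rw [key x, key y, h]

theorem rdiv_self (b : G) : b + (-(b + b) + b) = 0 := by
  apply add_right_cancel' (a := b)
  rw [rdiv_add', Gyrogroup.zero_add]

theorem rdiv_add_self (a b : G) : (a + b) + (-((a + b) + b) + (a + b)) = a := by
  apply add_right_cancel' (a := b)
  rw [rdiv_add']

end GyroAux

namespace GyroTop

open Filter Topology

variable {G : Type*} [TopologicalSpace G]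

theorem mem_clCore {𝒰 : Set (Set G)} {n : G} : n ∈ clCore 𝒰 ↔ ∀ U ∈ 𝒰, n ∈ closure U := by
  simp [clCore]

theorem mem_core_iff {x : G} {𝒰 : Set (Set G)} (hbase : IsNhdsBasisAt x 𝒰) {n : G} :
    n ∈ clCore 𝒰 ↔ (𝓝 x ⊓ 𝓝 n).NeBot := by
  constructor
  · intro h
    rw [Filter.inf_neBot_iff]
    intro s hs t ht
    obtain ⟨U, hU, hUs⟩ := hbase.2 s hs
    have hn : n ∈ closure U := (mem_clCore.1 h) U hU
    obtain ⟨y, hyt, hyU⟩ := mem_closure_iff_nhds.1 hn t ht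
    exact ⟨y, hUs hyU, hyt⟩
  · intro h
    rw [mem_clCore]
    intro U hU
    rw [mem_closure_iff_nhds]
    intro t ht
    obtain ⟨y, hyU, hyt⟩ := (Filter.inf_neBot_iff.1 h) (hbase.1 U hU) ht
    exact ⟨y, hyt, hyU⟩

theorem rmap2 (f : G × G → G) (hf : Continuous f) {x1 y1 x2 y2 : G}
    (h1 : (𝓝 x1 ⊓ 𝓝 y1).NeBot) (h2 : (𝓝 x2 ⊓ 𝓝 y2).NeBot) :
    (𝓝 (f (x1, x2)) ⊓ 𝓝 (f (y1, y2))).NeBot := by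
  have hF : ((𝓝 x1 ⊓ 𝓝 y1) ×ˢ (𝓝 x2 ⊓ 𝓝 y2)).NeBot := h1.prod h2
  have l1 : (𝓝 x1 ⊓ 𝓝 y1) ×ˢ (𝓝 x2 ⊓ 𝓝 y2) ≤ 𝓝 (x1, x2) := by
    rw [nhds_prod_eq]; exact Filter.prod_mono inf_le_left inf_le_left
  have l2 : (𝓝 x1 ⊓ 𝓝 y1) ×ˢ (𝓝 x2 ⊓ 𝓝 y2) ≤ 𝓝 (y1, y2) := by
    rw [nhds_prod_eq]; exact Filter.prod_mono inf_le_right inf_le_right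
  have t1 : Tendsto f ((𝓝 x1 ⊓ 𝓝 y1) ×ˢ (𝓝 x2 ⊓ 𝓝 y2)) (𝓝 (f (x1, x2))) :=
    (hf.tendsto (x1, x2)).mono_left l1
  have t2 : Tendsto f ((𝓝 x1 ⊓ 𝓝 y1) ×ˢ (𝓝 x2 ⊓ 𝓝 y2)) (𝓝 (f (y1, y2))) :=
    (hf.tendsto (y1, y2)).mono_left l2
  exact (hF.map f).mono (le_inf t1 t2)

theorem rmap1 (f : G → G) (hf : Continuous f) {x y : G} (h : (𝓝 x ⊓ 𝓝 y).NeBot) :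
    (𝓝 (f x) ⊓ 𝓝 (f y)).NeBot := by
  have t1 : Tendsto f (𝓝 x ⊓ 𝓝 y) (𝓝 (f x)) := (hf.tendsto x).mono_left inf_le_left
  have t2 : Tendsto f (𝓝 x ⊓ 𝓝 y) (𝓝 (f y)) := (hf.tendsto y).mono_left inf_le_right
  exact (h.map f).mono (le_inf t1 t2)

end GyroTop

theorem cont_add' {G α : Type*} [Add G] [TopologicalSpace G] [TopologicalSpace α]
    (hadd : Continuous fun p : G × G => p.1 + p.2) {f g : α → G}
    (hf : Continuous f) (hg : Continuous g) : Continuous fun x => f x + g x :=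
  hadd.comp (hf.prodMk hg)

/-- In a locally compact paratopological gyrocommutative gyrogroup `G` with a
neighborhood base `𝒰` at `0`, the set `B = ⋂ {cl U : U ∈ 𝒰}` is a closed invariant
subgyrogroup of `G`. -/
theorem clCore_is_closed_invariant_subgyrogroup
    {G : Type*} [Gyrogroup G] [TopologicalSpace G] [WeaklyLocallyCompactSpace G]
    (hadd : Continuous fun p : G × G => p.1 + p.2)
    (hgyrocomm : ∀ a b : G, a + b = gyr a b (b + a))
    (𝒰 : Set (Set G)) (hbase : IsNhdsBasisAt (0 : G) 𝒰) :
    IsClosed (clCore 𝒰) ∧ (clCore 𝒰).Nonempty ∧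
    (∀ a ∈ clCore 𝒰, ∀ b ∈ clCore 𝒰, a + b ∈ clCore 𝒰) ∧
    (∀ a ∈ clCore 𝒰, -a ∈ clCore 𝒰) ∧
    (∀ a b : G, (fun n => a + (n + b)) '' clCore 𝒰 = (fun n => (a + b) + n) '' clCore 𝒰) ∧
    (∀ a b : G, (fun n => (a + b) + n) '' clCore 𝒰 = (fun n => (a + n) + b) '' clCore 𝒰) := by
  have haip : ∀ a b : G, -(a + b) = -a + -b := GyroAux.aip hgyrocomm
  have memB : ∀ n : G, n ∈ clCore 𝒰 ↔ (nhds (0 : G) ⊓ nhds n).NeBot :=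
    fun n => GyroTop.mem_core_iff hbase
  have mem1 : ∀ f : G → G, Continuous f → f 0 = 0 → ∀ {n : G}, n ∈ clCore 𝒰 → f n ∈ clCore 𝒰 := by
    intro f hf hf0 n hn
    have h := GyroTop.rmap1 f hf ((memB n).1 hn)
    rw [hf0] at h
    exact (memB _).2 h
  have mem2 : ∀ f : G × G → G, Continuous f → f (0, 0) = 0 →
      ∀ {p q : G}, p ∈ clCore 𝒰 → q ∈ clCore 𝒰 → f (p, q) ∈ clCore 𝒰 := by
    intro f hf hf0 p q hp hq
    have h := GyroTop.rmap2 f hf ((memB p).1 hp) ((memB q).1 hq)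
    rw [hf0] at h
    exact (memB _).2 h
  have h0B : (0 : G) ∈ clCore 𝒰 := by
    rw [GyroTop.mem_clCore]
    intro U hU
    exact subset_closure (mem_of_mem_nhds (hbase.1 U hU))
  have memneg : ∀ {n : G}, n ∈ clCore 𝒰 → -n ∈ clCore 𝒰 := by
    intro n hn
    have h1 : (nhds n ⊓ nhds (0 : G)).NeBot := by
      rw [inf_comm]; exact (memB n).1 hn
    have h2 := GyroTop.rmap1 (fun u => -n + u)
      (cont_add' hadd continuous_const continuous_id) h1
    simp only [Gyrogroup.neg_add_cancel, Gyrogroup.add_zero] at h2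
    exact (memB _).2 h2
  refine ⟨?_, ⟨0, h0B⟩, ?_, fun a ha => memneg ha, ?_, ?_⟩
  · exact isClosed_biInter fun U _ => isClosed_closure
  · intro a ha b hb
    exact mem2 (fun p => p.1 + p.2) hadd
      (by show (0 : G) + 0 = 0; rw [Gyrogroup.zero_add]) ha hb
  · intro a b
    apply Set.Subset.antisymm
    · rintro _ ⟨n, hn, rfl⟩
      refine ⟨-(a + b) + (a + (n + b)), ?_, GyroAux.lc2 _ _⟩
      exact mem1 (fun u => -(a + b) + (a + (u + b)))
        (cont_add' hadd continuous_const (cont_add' hadd continuous_const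
          (cont_add' hadd continuous_id continuous_const)))
        (by show -(a + b) + (a + ((0 : G) + b)) = 0
            rw [Gyrogroup.zero_add, Gyrogroup.neg_add_cancel]) hn
    · rintro _ ⟨n, hn, rfl⟩
      set F : G × G → G := fun p =>
        (-a + ((a + b) + p.1)) +
          (((a + ((-a + -b) + p.2)) + -b) + (-a + ((a + b) + p.1))) with hF
      have cF : Continuous F := by
        have cw : Continuous (fun p : G × G => -a + ((a + b) + p.1)) :=
          cont_add' hadd continuous_const (cont_add' hadd continuous_const continuous_fst)
        have cz : Continuous (fun p : G × G => a + ((-a + -b) + p.2)) :=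
          cont_add' hadd continuous_const (cont_add' hadd continuous_const continuous_snd)
        exact cont_add' hadd cw (cont_add' hadd (cont_add' hadd cz continuous_const) cw)
      have hF0 : F (0, 0) = 0 := by
        show (-a + ((a + b) + 0)) +
          (((a + ((-a + -b) + 0)) + -b) + (-a + ((a + b) + 0))) = 0
        simp only [Gyrogroup.add_zero]
        rw [GyroAux.lc a b, GyroAux.lc2 a (-b), ← haip b b]
        exact GyroAux.rdiv_self b
      refine ⟨F (n, -n), mem2 F cF hF0 hn (memneg hn), ?_⟩
      have hnegw : -(-a + ((a + b) + n)) = a + ((-a + -b) + -n) := by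
        rw [haip (-a), GyroAux.neg_neg', haip (a + b), haip a b]
      show a + (((-a + ((a + b) + n)) +
        (((a + ((-a + -b) + -n)) + -b) + (-a + ((a + b) + n)))) + b) = (a + b) + n
      rw [← hnegw, ← haip (-a + ((a + b) + n)) b, GyroAux.rdiv_add', GyroAux.lc2]
  · intro a b
    apply Set.Subset.antisymm
    · rintro _ ⟨n, hn, rfl⟩
      set F : G × G → G := fun p =>
        -a + (((a + b) + p.1) + ((((-a + -b) + p.2) + -b) + ((a + b) + p.1))) with hF
      have cF : Continuous F := by
        have cc : Continuous (fun p : G × G => (a + b) + p.1) :=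
          cont_add' hadd continuous_const continuous_fst
        have cd : Continuous (fun p : G × G => (-a + -b) + p.2) :=
          cont_add' hadd continuous_const continuous_snd
        exact cont_add' hadd continuous_const
          (cont_add' hadd cc (cont_add' hadd (cont_add' hadd cd continuous_const) cc))
      have hF0 : F (0, 0) = 0 := by
        show -a + (((a + b) + 0) + ((((-a + -b) + 0) + -b) + ((a + b) + 0))) = 0
        simp only [Gyrogroup.add_zero]
        rw [← haip a b, ← haip (a + b) b, GyroAux.rdiv_add_self, Gyrogroup.neg_add_cancel]
      refine ⟨F (n, -n), mem2 F cF hF0 hn (memneg hn), ?_⟩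
      have hc : -((a + b) + n) = (-a + -b) + -n := by rw [haip (a + b) n, haip a b]
      show (a + (-a + (((a + b) + n) +
        ((((-a + -b) + -n) + -b) + ((a + b) + n))))) + b = (a + b) + n
      rw [GyroAux.lc2, ← hc, ← haip ((a + b) + n) b, GyroAux.rdiv_add']
    · rintro _ ⟨n, hn, rfl⟩
      refine ⟨-(a + b) + ((a + n) + b), ?_, GyroAux.lc2 _ _⟩
      exact mem1 (fun u => -(a + b) + ((a + u) + b))
        (cont_add' hadd continuous_const (cont_add' hadd
          (cont_add' hadd continuous_const continuous_id) continuous_const))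
        (by show -(a + b) + ((a + (0 : G)) + b) = 0
            rw [Gyrogroup.add_zero, Gyrogroup.neg_add_cancel]) hn
end

section
/- Let G be a paratopological gyrogroup and 𝒰 a neighborhood base at the identity 0 of G. Then for B = ⋂{cl(U) : U ∈ 𝒰}, one has gyr[a,b](B) = B for all a, b ∈ G. -/
open Gyrogroup

section GyroAux

variable {G : Type*} [Gyrogroup G]

private lemma neg_add_add' (y z : G) : -y + (y + z) = gyr (-y) y z := by
  rw [add_gyr_assoc, Gyrogroup.neg_add_cancel, Gyrogroup.zero_add]

private lemma Ladd_inj (y : G) : Function.Injective (fun z : G => y + z) := by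
  intro a b h
  have h2 : -y + (y + a) = -y + (y + b) := by
    simpa using congrArg (fun w => -y + w) h
  rw [neg_add_add', neg_add_add'] at h2
  exact (gyr_bijective (-y) y).1 h2

private lemma gyr_zero_left (a z : G) : gyr (0 : G) a z = z := by
  apply Ladd_inj a
  have h := add_gyr_assoc (0 : G) a z
  simp only [Gyrogroup.zero_add] at h
  exact h.symm

private lemma gyr_neg_self (y z : G) : gyr (-y) y z = z := by
  have h : gyr (-y + y) y = gyr (-y) y := gyr_left_loop (-y) y
  rw [Gyrogroup.neg_add_cancel] at h
  rw [← h, gyr_zero_left]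

private lemma left_cancel (y z : G) : -y + (y + z) = z := by
  rw [neg_add_add', gyr_neg_self]

private lemma gyr_self_neg (y z : G) : gyr y (-y) z = z := by
  have h : gyr (y + -y) (-y) = gyr y (-y) := gyr_left_loop y (-y)
  rw [Gyrogroup.add_neg_cancel] at h
  rw [← h, gyr_zero_left]

private lemma left_cancel2 (y z : G) : y + (-y + z) = z := by
  rw [add_gyr_assoc, Gyrogroup.add_neg_cancel, Gyrogroup.zero_add, gyr_self_neg]

private lemma gyr_eq (a b z : G) : gyr a b z = -(a + b) + (a + (b + z)) := by
  rw [add_gyr_assoc a b z, left_cancel]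

/-- Explicit inverse of `gyr a b`. -/
private def ginv (a b w : G) : G := -b + (-a + ((a + b) + w))

private lemma ginv_gyr (a b z : G) : ginv a b (gyr a b z) = z := by
  unfold ginv
  rw [← add_gyr_assoc, left_cancel, left_cancel]

private lemma gyr_ginv (a b w : G) : gyr a b (ginv a b w) = w := by
  apply Ladd_inj (a + b)
  show (a + b) + gyr a b (ginv a b w) = (a + b) + w
  rw [← add_gyr_assoc]
  unfold ginv
  rw [left_cancel2, left_cancel2]

private lemma gyr_zero (a b : G) : gyr a b (0 : G) = 0 := by
  rw [gyr_eq, Gyrogroup.add_zero, Gyrogroup.neg_add_cancel]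

private lemma ginv_zero (a b : G) : ginv a b (0 : G) = 0 := by
  unfold ginv
  rw [Gyrogroup.add_zero, left_cancel, Gyrogroup.neg_add_cancel]

variable [TopologicalSpace G]

private lemma cont_Ladd (hadd : Continuous fun p : G × G => p.1 + p.2) (c : G) :
    Continuous (fun z : G => c + z) :=
  hadd.comp (continuous_const.prodMk continuous_id)

private lemma cont_gyr (hadd : Continuous fun p : G × G => p.1 + p.2) (a b : G) :
    Continuous (gyr a b : G → G) := by
  have : (gyr a b : G → G) = fun z => -(a + b) + (a + (b + z)) := funext (gyr_eq a b)
  rw [this]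
  exact (cont_Ladd hadd _).comp ((cont_Ladd hadd _).comp (cont_Ladd hadd _))

private lemma cont_ginv (hadd : Continuous fun p : G × G => p.1 + p.2) (a b : G) :
    Continuous (ginv a b : G → G) :=
  (cont_Ladd hadd _).comp ((cont_Ladd hadd _).comp (cont_Ladd hadd _))

/-- A continuous map fixing `0` maps the closure-core into itself. -/
private lemma maps_clCore {𝒰 : Set (Set G)} (hbase : IsNhdsBasisAt (0 : G) 𝒰)
    {f : G → G} (hf : Continuous f) (hf0 : f 0 = 0) :
    ∀ x ∈ clCore 𝒰, f x ∈ clCore 𝒰 := by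
  intro x hx
  simp only [clCore, Set.mem_iInter] at hx ⊢
  intro U hU
  have hUn : f ⁻¹' U ∈ nhds (0 : G) := by
    apply hf.continuousAt.preimage_mem_nhds
    rw [hf0]; exact hbase.1 U hU
  obtain ⟨W, hW𝒰, hWsub⟩ := hbase.2 _ hUn
  have hxW : x ∈ closure W := hx W hW𝒰
  have h1 : f x ∈ closure (f '' W) :=
    (image_closure_subset_closure_image hf) ⟨x, hxW, rfl⟩
  exact closure_mono (Set.image_subset_iff.2 hWsub) h1

end GyroAux

/-- In a paratopological gyrogroup with neighborhood base `𝒰` at `0`, the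
set `B = ⋂ {cl U : U ∈ 𝒰}` satisfies `gyr[a,b](B) = B` for all `a, b`. -/
theorem gyr_image_clCore
    {G : Type*} [Gyrogroup G] [TopologicalSpace G]
    (hadd : Continuous fun p : G × G => p.1 + p.2)
    (𝒰 : Set (Set G)) (hbase : IsNhdsBasisAt (0 : G) 𝒰) :
    ∀ a b : G, gyr a b '' clCore 𝒰 = clCore 𝒰 := by
  intro a b
  apply Set.Subset.antisymm
  · rintro _ ⟨x, hx, rfl⟩
    exact maps_clCore hbase (cont_gyr hadd a b) (gyr_zero a b) x hx
  · intro x hx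
    exact ⟨ginv a b x, maps_clCore hbase (cont_ginv hadd a b) (ginv_zero a b) x hx,
      gyr_ginv a b x⟩
end

section
/- Let (G, τ, ⊕) be a paratopological gyrogroup and H an L-subgyrogroup of G. If H is compact, then the quotient mapping π : G → G/H, π(a) = a⊕H, from G onto the quotient space G/H (left cosets with the quotient topology) is perfect, i.e., π is continuous, closed, and all fibers π⁻¹(y) are compact. -/
open Gyrogroup

/-- The left coset `a ⊕ H`. -/
def leftAddCoset {G : Type*} [Gyrogroup G] (a : G) (H : Set G) : Set G :=
  (fun h => a + h) '' H

/-- Two elements are identified iff they have the same left coset of `H`. -/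
def cosetSetoid {G : Type*} [Gyrogroup G] (H : Set G) : Setoid G :=
  ⟨fun a b => leftAddCoset a H = leftAddCoset b H,
    ⟨fun _ => rfl, Eq.symm, Eq.trans⟩⟩


section GyroAux
variable {G : Type*} [Gyrogroup G]

private lemma gyro_left_cancel {a x y : G} (h : a + x = a + y) : x = y := by
  have h2 : (-a + a) + gyr (-a) a x = (-a + a) + gyr (-a) a y := by
    rw [← add_gyr_assoc, ← add_gyr_assoc, h]
  rw [Gyrogroup.neg_add_cancel, Gyrogroup.zero_add, Gyrogroup.zero_add] at h2
  exact (gyr_bijective (-a) a).1 h2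

private lemma gyro_gyr_zero_left (a z : G) : gyr (0:G) a z = z := by
  have h := add_gyr_assoc (0:G) a z
  rw [Gyrogroup.zero_add, Gyrogroup.zero_add] at h
  exact (gyro_left_cancel h.symm)

private lemma gyro_gyr_neg_self (a z : G) : gyr (-a) a z = z := by
  have h := gyr_left_loop (-a) a
  rw [Gyrogroup.neg_add_cancel] at h
  rw [← h, gyro_gyr_zero_left]

private lemma gyro_neg_add_cancel_left (a x : G) : -a + (a + x) = x := by
  rw [add_gyr_assoc, Gyrogroup.neg_add_cancel, Gyrogroup.zero_add, gyro_gyr_neg_self]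

section Coset

variable {H : Set G} (hne : H.Nonempty)
  (hHadd : ∀ a ∈ H, ∀ b ∈ H, a + b ∈ H) (hHneg : ∀ a ∈ H, -a ∈ H)
  (hL : ∀ a : G, ∀ h ∈ H, gyr a h '' H = H)

include hne hHadd hHneg in
private lemma gyro_zero_mem : (0:G) ∈ H := by
  obtain ⟨h, hh⟩ := hne
  have := hHadd h hh (-h) (hHneg h hh)
  rwa [Gyrogroup.add_neg_cancel] at this

include hne hHadd hHneg in
private lemma gyro_mem_coset_self (a : G) : a ∈ leftAddCoset a H :=
  ⟨0, gyro_zero_mem hne hHadd hHneg, add_zero a⟩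

include hHneg hL in
private lemma gyro_coset_symm {a x : G} (hx : x ∈ leftAddCoset a H) :
    a ∈ leftAddCoset x H := by
  obtain ⟨h, hh, rfl⟩ := hx
  refine ⟨gyr a h (-h), ?_, ?_⟩
  · rw [← hL a h hh]; exact ⟨-h, hHneg h hh, rfl⟩
  · show (a + h) + gyr a h (-h) = a
    rw [← add_gyr_assoc, Gyrogroup.add_neg_cancel, Gyrogroup.add_zero]

include hHadd hL in
private lemma gyro_coset_trans {a b c : G} (hb : b ∈ leftAddCoset a H)
    (hc : c ∈ leftAddCoset b H) : c ∈ leftAddCoset a H := by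
  obtain ⟨h, hh, rfl⟩ := hb
  obtain ⟨k, hk, rfl⟩ := hc
  obtain ⟨z, hz, rfl⟩ : k ∈ gyr a h '' H := by rw [hL a h hh]; exact hk
  refine ⟨h + z, hHadd h hh z hz, ?_⟩
  show a + (h + z) = (a + h) + gyr a h z
  exact add_gyr_assoc a h z

include hne hHadd hHneg hL in
private lemma gyro_coset_eq_iff {a x : G} :
    leftAddCoset x H = leftAddCoset a H ↔ x ∈ leftAddCoset a H := by
  constructor
  · intro h
    rw [← h]; exact gyro_mem_coset_self hne hHadd hHneg x
  · intro hx
    ext y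
    constructor
    · intro hy; exact gyro_coset_trans hHadd hL hx hy
    · intro hy; exact gyro_coset_trans hHadd hL (gyro_coset_symm hHneg hL hx) hy

end Coset
end GyroAux

/-- If `H` is a compact L-subgyrogroup of a paratopological gyrogroup `G`,
then the quotient map `π : G → G/H` (onto the left-coset space with the quotient topology)
is perfect: continuous, closed, with compact fibers. -/
theorem quotient_map_by_compact_L_subgyrogroup_is_perfect
    {G : Type*} [Gyrogroup G] [TopologicalSpace G]
    (hadd : Continuous fun p : G × G => p.1 + p.2)
    (H : Set G) (hne : H.Nonempty)
    (hHadd : ∀ a ∈ H, ∀ b ∈ H, a + b ∈ H) (hHneg : ∀ a ∈ H, -a ∈ H)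
    (hL : ∀ a : G, ∀ h ∈ H, gyr a h '' H = H)
    (hHcompact : IsCompact H) :
    Continuous (Quotient.mk (cosetSetoid H)) ∧
    IsClosedMap (Quotient.mk (cosetSetoid H)) ∧
    ∀ q : Quotient (cosetSetoid H), IsCompact (Quotient.mk (cosetSetoid H) ⁻¹' {q}) := by

  classical
  set s := cosetSetoid H
  have hmk : ∀ a b : G, Quotient.mk s a = Quotient.mk s b ↔
      leftAddCoset a H = leftAddCoset b H := by
    intro a b
    exact ⟨fun h => Quotient.exact h, fun h => Quotient.sound h⟩
  have hcoset_eq : ∀ a x : G,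
      leftAddCoset x H = leftAddCoset a H ↔ x ∈ leftAddCoset a H :=
    fun a x => gyro_coset_eq_iff hne hHadd hHneg hL
  have hcont : Continuous (Quotient.mk s) := continuous_quot_mk
  -- fibers
  have hfiber : ∀ a : G, Quotient.mk s ⁻¹' {Quotient.mk s a} = leftAddCoset a H := by
    intro a
    ext x
    simp only [Set.mem_preimage, Set.mem_singleton_iff]
    rw [hmk, hcoset_eq]
  have hfibers : ∀ q : Quotient s, IsCompact (Quotient.mk s ⁻¹' {q}) := by
    intro q
    obtain ⟨a, rfl⟩ := q.exists_rep
    rw [hfiber a]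
    have : Continuous fun h : G => a + h :=
      hadd.comp (continuous_const.prodMk continuous_id)
    exact hHcompact.image this
  refine ⟨hcont, ?_, hfibers⟩
  -- closed map
  intro C hC
  have hsat : Quotient.mk s ⁻¹' (Quotient.mk s '' C) = {x : G | ∃ h ∈ H, x + h ∈ C} := by
    ext x
    simp only [Set.mem_preimage, Set.mem_image, Set.mem_setOf_eq]
    constructor
    · rintro ⟨c, hc, hqc⟩
      have hx : x ∈ leftAddCoset c H := by
        rw [← hcoset_eq]
        exact Quotient.exact hqc.symm
      obtain ⟨h, hh, rfl⟩ := gyro_coset_symm hHneg hL hx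
      exact ⟨h, hh, hc⟩
    · rintro ⟨h, hh, hc⟩
      refine ⟨x + h, hc, ?_⟩
      rw [hmk, hcoset_eq]
      exact ⟨h, hh, rfl⟩
  have hsat_closed : IsClosed {x : G | ∃ h ∈ H, x + h ∈ C} := by
    rw [← isOpen_compl_iff]
    rw [isOpen_iff_mem_nhds]
    intro x hx
    simp only [Set.mem_compl_iff, Set.mem_setOf_eq, not_exists, not_and] at hx
    have hopen : IsOpen ((fun p : G × G => p.1 + p.2) ⁻¹' Cᶜ) :=
      hC.isOpen_compl.preimage hadd
    have hsub : ({x} : Set G) ×ˢ H ⊆ (fun p : G × G => p.1 + p.2) ⁻¹' Cᶜ := by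
      rintro ⟨y, h⟩ ⟨hy, hh⟩
      simp only [Set.mem_singleton_iff] at hy
      subst hy
      exact hx h hh
    obtain ⟨u, v, hu, hv, hxu, hHv, huv⟩ :=
      generalized_tube_lemma isCompact_singleton hHcompact hopen hsub
    refine Filter.mem_of_superset (hu.mem_nhds (hxu rfl)) ?_
    intro y hy
    simp only [Set.mem_compl_iff, Set.mem_setOf_eq, not_exists, not_and]
    intro h hh
    exact huv (Set.mk_mem_prod hy (hHv hh))
  have : IsClosed (Quotient.mk s ⁻¹' (Quotient.mk s '' C)) := by
    rw [hsat]; exact hsat_closed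
  exact (isQuotientMap_quot_mk.isClosed_preimage).1 this
end
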